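/- arXiv:2309.03757 — 2 statements merged into one kernel-verified Lean document; each statement's English description precedes it below -/
import Mathlib

section
/- Let (X,d) be a game space, S ⊆ X a nonempty compact subset, k ∈ ℕ, M > 0 and ε ∈ (0, h], where h ≥ M + diam(X). Suppose the robber has a strategy in the game against k cops on X, with an agility function τ satisfying τ(n) ≤ M for all n (and Σ_n τ(n)=∞), which guarantees d(r^n, c^n_i) > ε for all n and all i ≤ k against every cop play. Then the robber has a strategy in the game against k cops on X_{h,S}, with the same agility function τ, which guarantees d'(r^n, c^n_i) > ε/3 for all n and all i ≤ k against every cop play. In particular, k cops do not have a winning strategy on X_{h,S}. -/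
/-!
Game of Cops and Robber on metric spaces, following Mohar, formalized relative to an
explicit distance function `d : Y → Y → ℝ`.
-/

open Set Filter Topology

/-- The length of (the restriction to `[0,1]` of) a map `p : ℝ → Y` with respect to an
extended-real-valued cost function `c`, defined as the supremum over all finite monotone
partitions of `[0,1]` of the sums of the costs of consecutive points. -/
noncomputable def elen {Y : Type*} (c : Y → Y → ENNReal) (p : ℝ → Y) : ENNReal :=
  ⨆ q : ℕ × {u : ℕ → ℝ // Monotone u ∧ ∀ i, u i ∈ Set.Icc (0 : ℝ) 1},
    ∑ i ∈ Finset.range q.1, c (p (q.2.1 i)) (p (q.2.1 (i + 1)))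

/-- Continuity on `[0,1]` of a map `p : ℝ → Y` with respect to a cost function `c`,
stated in `ε`-`δ` form. -/
def econt {Y : Type*} (c : Y → Y → ENNReal) (p : ℝ → Y) : Prop :=
  ∀ t ∈ Set.Icc (0 : ℝ) 1, ∀ ε : ENNReal, 0 < ε →
    ∃ δ : ℝ, 0 < δ ∧ ∀ t' ∈ Set.Icc (0 : ℝ) 1, |t' - t| < δ → c (p t) (p t') < ε

/-- `d` is a metric on `Y`. -/
def IsMetricD (Y : Type*) (d : Y → Y → ℝ) : Prop :=
  (∀ x, d x x = 0) ∧ (∀ x y, d x y = 0 → x = y) ∧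
    (∀ x y, d x y = d y x) ∧ (∀ x y z, d x z ≤ d x y + d y z)

/-- Compactness of the metric space `(Y,d)`, in its sequential form: every sequence has a
convergent subsequence. -/
def CompactD (Y : Type*) (d : Y → Y → ℝ) : Prop :=
  ∀ u : ℕ → Y, ∃ (x : Y) (φ : ℕ → ℕ), StrictMono φ ∧
    Filter.Tendsto (fun n => d (u (φ n)) x) Filter.atTop (nhds 0)

/-- `(Y,d)` is a geodesic metric space: any two points `x, y` are joined by a continuous
path `p : [0,1] → Y` whose length equals `d x y`. -/
def IsGeodesicD (Y : Type*) (d : Y → Y → ℝ) : Prop :=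
  ∀ x y : Y, ∃ p : ℝ → Y,
    econt (fun a b => ENNReal.ofReal (d a b)) p ∧ p 0 = x ∧ p 1 = y ∧
      elen (fun a b => ENNReal.ofReal (d a b)) p = ENNReal.ofReal (d x y)

/-- A game space is a (nonempty) compact geodesic metric space. -/
def GameSpaceD (Y : Type*) (d : Y → Y → ℝ) : Prop :=
  Nonempty Y ∧ IsMetricD Y d ∧ CompactD Y d ∧ IsGeodesicD Y d

/-- An agility function: positive, with divergent sum. -/
def IsAgility (τ : ℕ → ℝ) : Prop := (∀ n, 0 < τ n) ∧ ¬ Summable τ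

/-- The trajectory of the `k` cops determined by initial positions `c0`, a cop strategy `σ`
(where `σ n` computes the cops' positions at step `n+1` from the robber's positions
`r^0, …, r^(n+1)`), and a robber trajectory `r`. -/
def copTraj {Y : Type*} {k : ℕ} (c0 : Fin k → Y)
    (σ : (n : ℕ) → (Fin (n + 2) → Y) → Fin k → Y) (r : ℕ → Y) : ℕ → Fin k → Y
  | 0 => c0
  | n + 1 => σ n fun i => r i

/-- The trajectory of the robber determined by his initial position `r0`, a robber strategy
`ρ` (where `ρ n` computes the robber's position at step `n+1` from the cops' positions
`c^0, …, c^n`), and a cop trajectory `c`. -/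
def robTraj {Y : Type*} {k : ℕ} (r0 : Y)
    (ρ : (n : ℕ) → (Fin (n + 1) → Fin k → Y) → Y) (c : ℕ → Fin k → Y) : ℕ → Y
  | 0 => r0
  | n + 1 => ρ n fun i => c i

/-- `k` cops have a winning strategy on `(Y,d)`: for every agility function and every initial
position chosen by the robber there is a cop strategy `σ`, assigning legal cop moves to every
history, such that against every legal robber trajectory the cops come arbitrarily close to
the robber. -/
def CopsWinWith (Y : Type*) (d : Y → Y → ℝ) (k : ℕ) : Prop :=
  ∀ τ : ℕ → ℝ, IsAgility τ → ∀ r0 : Y, ∀ c0 : Fin k → Y,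
    ∃ σ : (n : ℕ) → (Fin (n + 2) → Y) → Fin k → Y,
      ∀ r : ℕ → Y, r 0 = r0 → (∀ n, d (r n) (r (n + 1)) ≤ τ (n + 1)) →
        (∀ n i, d (copTraj c0 σ r n i) (copTraj c0 σ r (n + 1) i) ≤ τ (n + 1)) ∧
          (∀ ε : ℝ, 0 < ε → ∃ n i, d (r n) (copTraj c0 σ r n i) < ε)

/-- The cop number of `(Y,d)`, as an extended natural number: the least `k` such that `k`
cops have a winning strategy (`⊤` if there is no such `k`). -/
noncomputable def copNumber (Y : Type*) (d : Y → Y → ℝ) : ℕ∞ :=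
  sInf {m : ℕ∞ | ∃ k : ℕ, m = (k : ℕ∞) ∧ CopsWinWith Y d k}

/-- The robber has a strategy against `k` cops on `(Y,d)` with agility function `τ` which
guarantees that his moves are legal and that every cop always stays at distance `> ε` from
him, against every legal cop play. -/
def RobberWins (Y : Type*) (d : Y → Y → ℝ) (k : ℕ) (τ : ℕ → ℝ) (ε : ℝ) : Prop :=
  ∃ (r0 : Y) (c0 : Fin k → Y) (ρ : (n : ℕ) → (Fin (n + 1) → Fin k → Y) → Y),
    ∀ c : ℕ → Fin k → Y, c 0 = c0 → (∀ n i, d (c n i) (c (n + 1) i) ≤ τ (n + 1)) →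
      (∀ n, d (robTraj r0 ρ c n) (robTraj r0 ρ c (n + 1)) ≤ τ (n + 1)) ∧
        (∀ n i, ε < d (robTraj r0 ρ c n) (c n i))

/-!
The hat construction `X_{h,S}` of the paper: given a metric space `X`, a subset `S ⊆ X` and
`h > 0`, we glue onto `X` the hat over `S`, consisting of the cylinder `S × [0,h]` with the
`ℓ₁` metric and the top, a cone over `S` of height `H = h + diam S`.  The resulting space is
equipped with the induced length metric: distances are infima of lengths of piecewise paths,
each piece lying in one part and measured with that part's metric.
-/

section Hat

variable {X : Type*} [MetricSpace X]

/-- Points of the cylinder `S × [0,h]`. -/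
abbrev CylPt (S : Set X) (h : ℝ) : Type _ := ↥S × ↥(Set.Icc (0 : ℝ) h)

/-- Points of the (un-collapsed) top `S × [0, h + diam S]`. -/
abbrev TopPt (S : Set X) (h : ℝ) : Type _ := ↥S × ↥(Set.Icc (0 : ℝ) (h + Metric.diam S))

/-- The disjoint union of the three parts of `X_{h,S}`: the space `X`, the cylinder, and
the top. -/
abbrev PrePt (S : Set X) (h : ℝ) : Type _ := X ⊕ (CylPt S h ⊕ TopPt S h)

/-- The `ℓ₁` metric `d₁` on the cylinder. -/
noncomputable def cylDist {S : Set X} {h : ℝ} (p q : CylPt S h) : ℝ :=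
  dist (p.1 : X) (q.1 : X) + |(p.2 : ℝ) - (q.2 : ℝ)|

/-- The metric `d₂` on the top: the quotient pseudometric of the `ℓ₁` metric on
`S × [0,H]`, `H = h + diam S`, under collapsing the layer `S × {H}` to a point. -/
noncomputable def topDist {S : Set X} {h : ℝ} (p q : TopPt S h) : ℝ :=
  min (dist (p.1 : X) (q.1 : X) + |(p.2 : ℝ) - (q.2 : ℝ)|)
    ((h + Metric.diam S - (p.2 : ℝ)) + (h + Metric.diam S - (q.2 : ℝ)))

/-- The part-wise cost on the disjoint union: within one part, the metric of that part;
`⊤` across different parts. -/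
noncomputable def preDist (S : Set X) (h : ℝ) : PrePt S h → PrePt S h → ENNReal
  | Sum.inl x, Sum.inl y => ENNReal.ofReal (dist x y)
  | Sum.inr (Sum.inl p), Sum.inr (Sum.inl q) => ENNReal.ofReal (cylDist p q)
  | Sum.inr (Sum.inr p), Sum.inr (Sum.inr q) => ENNReal.ofReal (topDist p q)
  | _, _ => ⊤

/-- The gluing relation defining `X_{h,S}`: each `s ∈ S` is identified with the point
`(s,0)` of the cylinder; the layer `S × {h}` of the cylinder is identified with the layer
`S × {0}` of the top; and the whole layer `S × {H}` of the top is collapsed to one point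
(the cone point `z`). -/
inductive Glue (S : Set X) (h : ℝ) : PrePt S h → PrePt S h → Prop
  | base (s : ↥S) (t : ↥(Set.Icc (0 : ℝ) h)) (ht : (t : ℝ) = 0) :
      Glue S h (Sum.inl (s : X)) (Sum.inr (Sum.inl (s, t)))
  | mid (s : ↥S) (t : ↥(Set.Icc (0 : ℝ) h)) (u : ↥(Set.Icc (0 : ℝ) (h + Metric.diam S)))
      (ht : (t : ℝ) = h) (hu : (u : ℝ) = 0) :
      Glue S h (Sum.inr (Sum.inl (s, t))) (Sum.inr (Sum.inr (s, u)))
  | apex (p q : TopPt S h) (hp : (p.2 : ℝ) = h + Metric.diam S)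
      (hq : (q.2 : ℝ) = h + Metric.diam S) :
      Glue S h (Sum.inr (Sum.inr p)) (Sum.inr (Sum.inr q))

/-- The underlying set of `X_{h,S}`: the quotient of the disjoint union by the gluing. -/
abbrev GlueSp (S : Set X) (h : ℝ) : Type _ := Quot (Glue S h)

end Hat

/-- A piecewise path between two points of a glued space `Quot R`: a finite sequence of
paths, each continuous within a single part (with respect to the part-wise cost `c`), with
consecutive endpoints glued. -/
structure PiecewisePath {Y : Type*} (c : Y → Y → ENNReal) (R : Y → Y → Prop)
    (a b : Quot R) where
  m : ℕ
  piece : Fin (m + 1) → ℝ → Y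
  cont : ∀ i, econt c (piece i)
  first : Quot.mk R (piece 0 0) = a
  last : Quot.mk R (piece (Fin.last m) 1) = b
  link : ∀ i : Fin m, Quot.mk R (piece i.castSucc 1) = Quot.mk R (piece i.succ 0)

/-- The length of a piecewise path: the sum of the lengths of its pieces, each measured with
the corresponding part's metric. -/
noncomputable def PiecewisePath.len {Y : Type*} {c : Y → Y → ENNReal} {R : Y → Y → Prop}
    {a b : Quot R} (P : PiecewisePath c R a b) : ENNReal :=
  ∑ i : Fin (P.m + 1), elen c (P.piece i)

/-- The induced length metric on a glued space: the infimum of lengths of piecewise paths. -/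
noncomputable def glueDist {Y : Type*} (c : Y → Y → ENNReal) (R : Y → Y → Prop)
    (a b : Quot R) : ENNReal :=
  ⨅ P : PiecewisePath c R a b, P.len

section Hat2

variable {X : Type*} [MetricSpace X]

/-- The induced length metric `d'` on `X_{h,S}`, with values in `[0,∞]`. -/
noncomputable def hatDistE (S : Set X) (h : ℝ) (a b : GlueSp S h) : ENNReal :=
  glueDist (preDist S h) (Glue S h) a b

/-- The induced length metric `d'` on `X_{h,S}`, as a real-valued function. -/
noncomputable def hatDist (S : Set X) (h : ℝ) (a b : GlueSp S h) : ℝ :=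
  (hatDistE S h a b).toReal

/-- The canonical inclusion `X ↪ X_{h,S}`. -/
def iotaX (S : Set X) (h : ℝ) (x : X) : GlueSp S h := Quot.mk _ (Sum.inl x)

end Hat2

/-!
The robber stays in `X` and plays his strategy there against shadow cops: each shadow chases the
projection to `X` of its cop and stays within the cop's height of that projection. A cop higher
than `h - M ≥ diam X` is then trivially shadowed, and a cop higher than `h ≥ ε` is `ε`-far from
`X`. Below height `h` the distance from `y ∈ X` is bounded below by the `1`-Lipschitz potential
`min (dist (proj a) y + height a) (2 * apexHeight - height a)`, which equals
`dist (proj a) y + height a` there; this gives both the chase step and the separation bound.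
Finally, a robber keeping a positive distance from all cops forever defeats every cop strategy.
-/

section PathLength

variable {Y : Type*} {c : Y → Y → ENNReal} {p : ℝ → Y}

def Rectifiable (c : Y → Y → ENNReal) (p : ℝ → Y) : Prop :=
  econt c p ∧ elen c p ≠ ⊤

lemma sum_le_elen (q : ℕ) {u : ℕ → ℝ} (hu : Monotone u) (hmem : ∀ i, u i ∈ Icc (0 : ℝ) 1) :
    ∑ i ∈ Finset.range q, c (p (u i)) (p (u (i + 1))) ≤ elen c p :=
  le_iSup (fun q : ℕ × {u : ℕ → ℝ // Monotone u ∧ ∀ i, u i ∈ Icc (0 : ℝ) 1} =>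
    ∑ i ∈ Finset.range q.1, c (p (q.2.1 i)) (p (q.2.1 (i + 1)))) (q, ⟨u, hu, hmem⟩)

lemma add_le_elen {t : ℝ} (ht : t ∈ Icc (0 : ℝ) 1) :
    c (p 0) (p t) + c (p t) (p 1) ≤ elen c p := by
  let u : ℕ → ℝ := fun i => if i = 0 then 0 else if i = 1 then t else 1
  have hu : Monotone u := monotone_nat_of_le_succ fun i => by
    rcases i with _ | _ | i <;> simp [u, ht.1, ht.2]
  have hmem : ∀ i, u i ∈ Icc (0 : ℝ) 1 := fun i => by
    rcases i with _ | _ | i <;> simp [u, ht.1, ht.2]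
  simpa [Finset.sum_range_succ, u] using sum_le_elen 2 hu hmem

lemma le_elen : c (p 0) (p 1) ≤ elen c p :=
  le_add_self.trans (by simpa using add_le_elen (c := c) (p := p) (t := 0) ⟨le_rfl, zero_le_one⟩)

lemma elen_comp_one_sub_le (hc : ∀ x y, c x y = c y x) :
    elen c (fun θ => p (1 - θ)) ≤ elen c p := by
  refine iSup_le fun ⟨q, u, hu, hmem⟩ => ?_
  have hv : Monotone fun j => 1 - u (q - j) := fun i j hij => sub_le_sub_left (hu (by omega)) 1
  have hvmem : ∀ j, 1 - u (q - j) ∈ Icc (0 : ℝ) 1 := fun j =>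
    ⟨by linarith [(hmem (q - j)).2], by linarith [(hmem (q - j)).1]⟩
  refine le_of_eq_of_le ?_ (sum_le_elen q hv hvmem)
  rw [← Finset.sum_range_reflect]
  refine Finset.sum_congr rfl fun i hi => ?_
  have hi : i < q := Finset.mem_range.1 hi
  dsimp only
  rw [show q - 1 - i + 1 = q - i by omega, show q - (i + 1) = q - 1 - i by omega, hc]

lemma econt_comp_one_sub (hp : econt c p) : econt c (fun θ => p (1 - θ)) := by
  intro t ht ε hε
  obtain ⟨δ, hδ, hp⟩ := hp (1 - t) ⟨by linarith [ht.2], by linarith [ht.1]⟩ ε hε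
  refine ⟨δ, hδ, fun t' ht' htt' => hp (1 - t') ⟨by linarith [ht'.2], by linarith [ht'.1]⟩ ?_⟩
  rwa [show 1 - t' - (1 - t) = -(t' - t) by ring, abs_neg]

lemma Rectifiable.comp_one_sub (hp : Rectifiable c p) (hc : ∀ x y, c x y = c y x) :
    Rectifiable c (fun θ => p (1 - θ)) :=
  ⟨econt_comp_one_sub hp.1, ne_top_of_le_ne_top hp.2 (elen_comp_one_sub_le hc)⟩

lemma rectifiable_of_lipschitz {L : ℝ} (hL : 0 ≤ L)
    (hc : ∀ s ∈ Icc (0 : ℝ) 1, ∀ t ∈ Icc (0 : ℝ) 1, c (p s) (p t) ≤ ENNReal.ofReal (L * |t - s|)) :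
    Rectifiable c p := by
  refine ⟨fun t ht ε hε => ?_, ne_top_of_le_ne_top (ENNReal.ofReal_ne_top (r := L)) (iSup_le ?_)⟩
  · obtain ⟨r, -, hr0, hrε⟩ := ENNReal.lt_iff_exists_real_btwn.1 hε
    have hr : 0 < r := ENNReal.ofReal_pos.1 hr0
    refine ⟨r / (L + 1), by positivity, fun t' ht' htt' => (hc t ht t' ht').trans_lt ?_⟩
    refine lt_of_le_of_lt (ENNReal.ofReal_le_ofReal ?_) hrε
    calc L * |t' - t| ≤ L * (r / (L + 1)) := mul_le_mul_of_nonneg_left htt'.le hL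
      _ ≤ r := by rw [mul_div_assoc', div_le_iff₀ (by positivity)]; nlinarith
  · rintro ⟨q, u, hu, hmem⟩
    have hstep : ∀ i, 0 ≤ u (i + 1) - u i := fun i => sub_nonneg.2 (hu i.le_succ)
    calc ∑ i ∈ Finset.range q, c (p (u i)) (p (u (i + 1)))
        ≤ ∑ i ∈ Finset.range q, ENNReal.ofReal (L * (u (i + 1) - u i)) :=
          Finset.sum_le_sum fun i _ => by
            simpa [abs_of_nonneg (hstep i)] using hc _ (hmem i) _ (hmem (i + 1))
      _ = ENNReal.ofReal (L * (u q - u 0)) := by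
          rw [← ENNReal.ofReal_sum_of_nonneg fun i _ => mul_nonneg hL (hstep i), ← Finset.mul_sum,
            Finset.sum_range_sub u]
      _ ≤ ENNReal.ofReal L := ENNReal.ofReal_le_ofReal <|
          mul_le_of_le_one_right hL (by linarith [(hmem q).2, (hmem 0).1])

lemma rectifiable_const {y : Y} (hy : c y y = 0) : Rectifiable c (fun _ => y) :=
  rectifiable_of_lipschitz le_rfl fun _ _ _ _ => by simp [hy]

lemma elen_const {y : Y} (hy : c y y = 0) : elen c (fun _ => y) = 0 :=
  le_antisymm (iSup_le fun _ => by simp [hy]) zero_le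

lemma glueDist_le_elen {R : Y → Y → Prop} {a b : Quot R} (hp : econt c p)
    (ha : Quot.mk R (p 0) = a) (hb : Quot.mk R (p 1) = b) : glueDist c R a b ≤ elen c p :=
  (iInf_le _ ⟨0, fun _ => p, fun _ => hp, ha, hb, fun i => i.elim0⟩).trans_eq (by
    simp [PiecewisePath.len])

/-- Telescope along the pieces of a path. -/
lemma abs_lift_sub_le_glueDist {R : Y → Y → Prop} (F : Y → ℝ) (hR : ∀ p q, R p q → F p = F q)
    (hF : ∀ p q, ENNReal.ofReal |F p - F q| ≤ c p q) (a b : Quot R) :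
    ENNReal.ofReal |Quot.lift F hR a - Quot.lift F hR b| ≤ glueDist c R a b := by
  refine le_iInf fun P => ?_
  have hlink (i : Fin P.m) : F (P.piece i.castSucc 1) = F (P.piece i.succ 0) :=
    congrArg (Quot.lift F hR) (P.link i)
  have htel : Quot.lift F hR a - Quot.lift F hR b =
      ∑ j, (F (P.piece j 0) - F (P.piece j 1)) := by
    have ha : F (P.piece 0 0) = Quot.lift F hR a := congrArg (Quot.lift F hR) P.first
    have hb : F (P.piece (Fin.last P.m) 1) = Quot.lift F hR b := congrArg (Quot.lift F hR) P.last
    rw [Finset.sum_sub_distrib, Fin.sum_univ_succ, Fin.sum_univ_castSucc, ha, hb]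
    simp only [hlink]
    ring
  calc ENNReal.ofReal |Quot.lift F hR a - Quot.lift F hR b|
      ≤ ENNReal.ofReal (∑ j, |F (P.piece j 0) - F (P.piece j 1)|) :=
        ENNReal.ofReal_le_ofReal (htel ▸ Finset.abs_sum_le_sum_abs _ _)
    _ = ∑ j, ENNReal.ofReal |F (P.piece j 0) - F (P.piece j 1)| :=
        ENNReal.ofReal_sum_of_nonneg fun _ _ => abs_nonneg _
    _ ≤ P.len := Finset.sum_le_sum fun j _ => (hF _ _).trans le_elen

end PathLength

lemma IsGeodesicD.exists_dist_le {X : Type*} [MetricSpace X]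
    (hgeo : IsGeodesicD X fun x y => dist x y) (x y : X) {t : ℝ} (ht : 0 ≤ t) :
    ∃ w, dist x w ≤ t ∧ dist w y ≤ max 0 (dist x y - t) := by
  rcases le_or_gt (dist x y) t with hle | hlt
  · exact ⟨y, hle, by simp⟩
  obtain ⟨p, hp, hp0, hp1, hplen⟩ := hgeo x y
  have hpc : ContinuousOn p (Icc (0 : ℝ) 1) := by
    intro θ hθ
    refine Metric.continuousWithinAt_iff.2 fun ε hε => ?_
    obtain ⟨δ, hδ, hpδ⟩ := hp θ hθ (ENNReal.ofReal ε) (ENNReal.ofReal_pos.2 hε)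
    refine ⟨δ, hδ, fun {θ'} hθ' hθθ' => ?_⟩
    rw [dist_comm]
    exact (ENNReal.ofReal_lt_ofReal_iff hε).1 (hpδ θ' hθ' hθθ')
  have hcont : ContinuousOn (fun θ => dist x (p θ)) (Icc (0 : ℝ) 1) :=
    (continuous_const.dist continuous_id).comp_continuousOn hpc
  obtain ⟨θ, hθ, hθt⟩ := intermediate_value_Icc zero_le_one hcont
    (by simpa [hp0, hp1] using ⟨ht, hlt.le⟩ : t ∈ Icc (dist x (p 0)) (dist x (p 1)))
  have hsplit := add_le_elen (c := fun a b => ENNReal.ofReal (dist a b)) (p := p) hθ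
  rw [hplen, hp0, hp1, ← ENNReal.ofReal_add dist_nonneg dist_nonneg,
    ENNReal.ofReal_le_ofReal_iff dist_nonneg] at hsplit
  exact ⟨p θ, hθt.le, le_max_of_le_right (by linarith [hθt])⟩

lemma CompactD.dist_le_diam {X : Type*} [MetricSpace X] (hc : CompactD X fun x y => dist x y)
    (x y : X) : dist x y ≤ Metric.diam (univ : Set X) := by
  have : SeqCompactSpace X := ⟨fun u _ => by
    obtain ⟨a, φ, hφ, ha⟩ := hc u
    exact ⟨a, mem_univ a, φ, hφ, tendsto_iff_dist_tendsto_zero.2 ha⟩⟩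
  have : CompactSpace X := compactSpace_iff_seqCompactSpace.2 this
  exact Metric.dist_le_diam_of_mem Metric.isBounded_of_compactSpace (mem_univ x) (mem_univ y)

section Game

variable {Y Z : Type*} {d : Y → Y → ℝ} {k : ℕ} {τ : ℕ → ℝ} {ε : ℝ}

lemma RobberWins.mono {ε' : ℝ} (hrob : RobberWins Y d k τ ε) (hε : ε' ≤ ε) :
    RobberWins Y d k τ ε' := by
  obtain ⟨r0, c0, ρ, hρ⟩ := hrob
  exact ⟨r0, c0, ρ, fun c hc0 hc => ⟨(hρ c hc0 hc).1, fun n i => hε.trans_lt ((hρ c hc0 hc).2 n i)⟩⟩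

lemma robTraj_congr (r0 : Y) (ρ : (n : ℕ) → (Fin (n + 1) → Fin k → Y) → Y)
    {c c' : ℕ → Fin k → Y} {n : ℕ} (h : ∀ m < n, c m = c' m) :
    robTraj r0 ρ c n = robTraj r0 ρ c' n := by
  cases n with
  | zero => rfl
  | succ n => exact congrArg (ρ n) (funext fun j => h j j.isLt)

lemma copTraj_congr (c0 : Fin k → Y) (σ : (n : ℕ) → (Fin (n + 2) → Y) → Fin k → Y)
    {r r' : ℕ → Y} {n : ℕ} (h : ∀ m ≤ n, r m = r' m) :
    copTraj c0 σ r n = copTraj c0 σ r' n := by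
  cases n with
  | zero => rfl
  | succ n => exact congrArg (σ n) (funext fun j => h j (Nat.lt_succ_iff.1 j.isLt))

noncomputable def mutualPlay (r0 : Y) (c0 : Fin k → Y)
    (ρ : (n : ℕ) → (Fin (n + 1) → Fin k → Y) → Y)
    (σ : (n : ℕ) → (Fin (n + 2) → Y) → Fin k → Y) : ℕ → Y × (Fin k → Y)
  | 0 => (r0, c0)
  | n + 1 =>
    let r := ρ n fun j => (mutualPlay r0 c0 ρ σ j).2
    (r, σ n fun j => if (j : ℕ) ≤ n then (mutualPlay r0 c0 ρ σ j).1 else r)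
termination_by n => n
decreasing_by all_goals omega

lemma stopped_steps {α : Type*} (P : ℕ → α → α → Prop) (hP : ∀ m a, P m a a) (x : ℕ → α)
    {n : ℕ} (hx : ∀ m < n, P m (x m) (x (m + 1))) (m : ℕ) :
    P m (x (min m n)) (x (min (m + 1) n)) := by
  rcases lt_or_ge m n with hm | hm
  · rw [min_eq_left hm.le, min_eq_left hm]
    exact hx m hm
  · rw [min_eq_right hm, min_eq_right (hm.trans m.le_succ)]
    exact hP m _

section MutualPlay

variable (r0 : Y) (c0 : Fin k → Y) (ρ : (n : ℕ) → (Fin (n + 1) → Fin k → Y) → Y)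
  (σ : (n : ℕ) → (Fin (n + 2) → Y) → Fin k → Y)

lemma robTraj_mutualPlay (n : ℕ) :
    robTraj r0 ρ (fun m => (mutualPlay r0 c0 ρ σ m).2) n = (mutualPlay r0 c0 ρ σ n).1 := by
  cases n with
  | zero => exact (congrArg Prod.fst (mutualPlay.eq_1 ..)).symm
  | succ n => exact (congrArg Prod.fst (mutualPlay.eq_2 ..)).symm

lemma copTraj_mutualPlay (n : ℕ) :
    copTraj c0 σ (fun m => (mutualPlay r0 c0 ρ σ m).1) n = (mutualPlay r0 c0 ρ σ n).2 := by
  cases n with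
  | zero => exact (congrArg Prod.snd (mutualPlay.eq_1 ..)).symm
  | succ n =>
    rw [mutualPlay.eq_2]
    refine congrArg (σ n) (funext fun j => ?_)
    split_ifs with hj
    · rfl
    · rw [show (j : ℕ) = n + 1 by omega]
      exact congrArg Prod.fst (mutualPlay.eq_2 ..)

end MutualPlay

lemma RobberWins.not_copsWinWith (hrob : RobberWins Y d k τ ε) (hτ : IsAgility τ) (hε : 0 < ε)
    (hd : ∀ y, d y y = 0) : ¬ CopsWinWith Y d k := by
  intro hcops
  obtain ⟨r0, c0, ρ, hρ⟩ := hrob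
  obtain ⟨σ, hσ⟩ := hcops τ hτ r0 c0
  set r : ℕ → Y := fun n => (mutualPlay r0 c0 ρ σ n).1
  set c : ℕ → Fin k → Y := fun n => (mutualPlay r0 c0 ρ σ n).2
  have hr0 : r 0 = r0 := (robTraj_mutualPlay r0 c0 ρ σ 0).symm
  have hc0 : c 0 = c0 := (copTraj_mutualPlay r0 c0 ρ σ 0).symm
  have hτ0 (m : ℕ) : (0 : ℝ) ≤ τ m := (hτ.1 m).le
  -- Each strategy is only guaranteed to move legally against a legal opponent, so it is played
  -- against the opponent's play stopped at the current time.
  have hrob_step (n : ℕ) (hc : ∀ m < n, ∀ i, d (c m i) (c (m + 1) i) ≤ τ (m + 1)) :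
      d (r n) (r (n + 1)) ≤ τ (n + 1) := by
    have hstop := stopped_steps (fun m a b => ∀ i, d (a i) (b i) ≤ τ (m + 1))
      (fun m a i => (hd (a i)).trans_le (hτ0 _)) c hc
    have heq (m : ℕ) (hm : m ≤ n + 1) : robTraj r0 ρ (fun m => c (min m n)) m = r m :=
      (robTraj_congr r0 ρ fun l hl => by rw [min_eq_left (by omega)]).trans
        (robTraj_mutualPlay r0 c0 ρ σ m)
    simpa only [heq n n.le_succ, heq (n + 1) le_rfl] using
      (hρ (fun m => c (min m n)) (by simpa using hc0) hstop).1 n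
  have hcop_step (n : ℕ) (hr : ∀ m ≤ n, d (r m) (r (m + 1)) ≤ τ (m + 1)) (i : Fin k) :
      d (c n i) (c (n + 1) i) ≤ τ (n + 1) := by
    have hstop := stopped_steps (fun m a b => d a b ≤ τ (m + 1))
      (fun m a => (hd a).trans_le (hτ0 _)) r (n := n + 1) fun m hm => hr m (by omega)
    have heq (m : ℕ) (hm : m ≤ n + 1) : copTraj c0 σ (fun m => r (min m (n + 1))) m = c m :=
      (copTraj_congr c0 σ fun l hl => by rw [min_eq_left (by omega)]).trans
        (copTraj_mutualPlay r0 c0 ρ σ m)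
    simpa only [heq n n.le_succ, heq (n + 1) le_rfl] using
      (hσ (fun m => r (min m (n + 1))) (by simpa using hr0) hstop).1 n i
  have hlegal (n : ℕ) : d (r n) (r (n + 1)) ≤ τ (n + 1) ∧
      ∀ i, d (c n i) (c (n + 1) i) ≤ τ (n + 1) := by
    induction n using Nat.strong_induction_on with
    | _ n ih =>
      have hr := hrob_step n fun m hm => (ih m hm).2
      exact ⟨hr, hcop_step n fun m hm => hm.lt_or_eq.elim (fun h => (ih m h).1) (· ▸ hr)⟩
  obtain ⟨n, i, hn⟩ := (hσ r hr0 fun n => (hlegal n).1).2 ε hε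
  have hsep := (hρ c hc0 fun n => (hlegal n).2).2 n i
  rw [robTraj_mutualPlay] at hsep
  rw [copTraj_mutualPlay] at hn
  linarith

/-- `shadow c0 step n` reads the cop positions at times `0, …, n`; at each time `m` every shadow
moves by `step m` in view of its cop's move from time `m` to `m + 1`. -/
def shadow (c0 : Fin k → Y) (step : ℕ → Y → Z → Z → Y) :
    (n : ℕ) → (Fin (n + 1) → Fin k → Z) → Fin k → Y
  | 0, _ => c0
  | n + 1, hist => fun i =>
    step n (shadow c0 step n (fun j => hist j.castSucc) i) (hist (Fin.last n).castSucc i)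
      (hist (Fin.last (n + 1)) i)

/-- The robber plays his strategy in `Y` against shadow cops, which follow the cops of `Z` move
by move while preserving `J`. -/
lemma RobberWins.transfer {dZ : Z → Z → ℝ} (hrob : RobberWins Y d k τ ε) (ι : Y → Z)
    (hι : ∀ y y', dZ (ι y) (ι y') ≤ d y y') (J : Y → Z → Prop) (hJ : ∀ y, J y (ι y))
    (hstep : ∀ n y z z', J y z → dZ z z' ≤ τ (n + 1) → ∃ y', d y y' ≤ τ (n + 1) ∧ J y' z')
    (hsep : ∀ r y z, J y z → ε < d r y → ε < dZ (ι r) z) :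
    RobberWins Z dZ k τ ε := by
  obtain ⟨r0, c0, ρ, hρ⟩ := hrob
  have : ∀ n y z z', ∃ y', J y z → dZ z z' ≤ τ (n + 1) → d y y' ≤ τ (n + 1) ∧ J y' z' := by
    intro n y z z'
    by_cases hyz : J y z ∧ dZ z z' ≤ τ (n + 1)
    · obtain ⟨y', hy'⟩ := hstep n y z z' hyz.1 hyz.2
      exact ⟨y', fun _ _ => hy'⟩
    · exact ⟨y, fun h1 h2 => absurd ⟨h1, h2⟩ hyz⟩
  choose step hstep using this
  refine ⟨ι r0, fun i => ι (c0 i), fun n hist => ι (ρ n fun j => shadow c0 step j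
    fun l => hist ⟨l, by omega⟩), fun c hc0 hc => ?_⟩
  set cY : ℕ → Fin k → Y := fun n => shadow c0 step n fun j => c j
  have hJc (n : ℕ) (i : Fin k) : J (cY n i) (c n i) := by
    induction n with
    | zero => exact hc0 ▸ hJ (c0 i)
    | succ n ih => exact (hstep n _ _ _ ih (hc n i)).2
  have hcY (n : ℕ) (i : Fin k) : d (cY n i) (cY (n + 1) i) ≤ τ (n + 1) :=
    (hstep n _ _ _ (hJc n i) (hc n i)).1
  have htraj (n : ℕ) : robTraj (ι r0) (fun n hist => ι (ρ n fun j => shadow c0 step j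
      fun l => hist ⟨l, by omega⟩)) c n = ι (robTraj r0 ρ cY n) := by
    cases n <;> rfl
  obtain ⟨hlegal, hfar⟩ := hρ cY rfl hcY
  refine ⟨fun n => ?_, fun n i => ?_⟩
  · rw [htraj, htraj]
    exact (hι _ _).trans (hlegal n)
  · rw [htraj]
    exact hsep _ _ _ (hJc n i) (hfar n i)

end Game

namespace Hat

section Segment

variable {X : Type*} {S : Set X} {a b : ℝ} (s : S) (t₀ t₁ : Icc a b)

noncomputable def vseg (θ : ℝ) : S × Icc a b :=
  (s, projIcc a b (t₀.2.1.trans t₀.2.2) (t₀ + θ * (t₁ - t₀)))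

@[simp] lemma vseg_zero : vseg s t₀ t₁ 0 = (s, t₀) := by
  simp [vseg]

@[simp] lemma vseg_one : vseg s t₀ t₁ 1 = (s, t₁) := by
  simp [vseg]

lemma abs_vseg_sub_le (θ θ' : ℝ) :
    |((vseg s t₀ t₁ θ).2 : ℝ) - (vseg s t₀ t₁ θ').2| ≤ |(t₁ : ℝ) - t₀| * |θ' - θ| :=
  (abs_projIcc_sub_projIcc (t₀.2.1.trans t₀.2.2)).trans_eq <| by
    rw [← abs_mul, abs_sub_comm]
    congr 1
    ring

end Segment

variable {X : Type*} [MetricSpace X] {S : Set X} {h : ℝ}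

noncomputable abbrev apexHeight (S : Set X) (h : ℝ) : ℝ := h + (h + Metric.diam S)

/-- Meaningless at the apex, where all of `S × {h + diam S}` is collapsed. -/
def preFoot : PrePt S h → X
  | .inl x => x
  | .inr (.inl q) => q.1
  | .inr (.inr q) => q.1

def preHeight : PrePt S h → ℝ
  | .inl _ => 0
  | .inr (.inl q) => q.2
  | .inr (.inr q) => h + q.2

lemma glue_foot_height {α : Type*} (G : X → ℝ → α)
    (hG : ∀ x x', G x (apexHeight S h) = G x' (apexHeight S h)) (p q : PrePt S h)
    (hpq : Glue S h p q) : G (preFoot p) (preHeight p) = G (preFoot q) (preHeight q) := by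
  rcases hpq with ⟨s, t, ht⟩ | ⟨s, t, u, ht, hu⟩ | ⟨p, q, hp, hq⟩
  · simp [preFoot, preHeight, ht]
  · simp [preFoot, preHeight, ht, hu]
  · simp only [preHeight, hp, hq]
    exact hG _ _

def lift {α : Type*} (G : X → ℝ → α)
    (hG : ∀ x x', G x (apexHeight S h) = G x' (apexHeight S h)) : GlueSp S h → α :=
  Quot.lift (fun w => G (preFoot w) (preHeight w)) (glue_foot_height G hG)

def height : GlueSp S h → ℝ := lift (fun _ t => t) fun _ _ => rfl

noncomputable def proj (s₀ : X) : GlueSp S h → X :=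
  lift (fun x t => if t = apexHeight S h then s₀ else x) fun _ _ => by simp

/-- A `1`-Lipschitz stand-in for the distance from `y ∈ X`. -/
noncomputable def potential (y : X) : GlueSp S h → ℝ :=
  lift (fun x t => min (dist x y + t) (2 * apexHeight S h - t)) fun x x' => by
    rw [min_eq_right (by linarith [dist_nonneg (x := x) (y := y)]),
      min_eq_right (by linarith [dist_nonneg (x := x') (y := y)])]

lemma preHeight_nonneg (h0 : 0 ≤ h) (w : PrePt S h) : 0 ≤ preHeight w := by
  rcases w with x | q | q
  · exact le_rfl
  · exact q.2.2.1
  · exact add_nonneg h0 q.2.2.1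

lemma preHeight_le (h0 : 0 ≤ h) (w : PrePt S h) : preHeight w ≤ apexHeight S h := by
  have hdiam : 0 ≤ Metric.diam S := Metric.diam_nonneg
  rcases w with x | q | q
  · exact add_nonneg h0 (add_nonneg h0 hdiam)
  · show (q.2 : ℝ) ≤ h + (h + Metric.diam S)
    linarith [q.2.2.2]
  · show h + (q.2 : ℝ) ≤ h + (h + Metric.diam S)
    linarith [q.2.2.2]

lemma preDist_self (w : PrePt S h) : preDist S h w w = 0 := by
  rcases w with x | q | q
  · simp [preDist]
  · simp [preDist, cylDist]
  · simp only [preDist, topDist, dist_self, sub_self, abs_zero, add_zero, ENNReal.ofReal_eq_zero]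
    exact min_le_left _ _

lemma preDist_comm (v w : PrePt S h) : preDist S h v w = preDist S h w v := by
  rcases v with x | p | p <;> rcases w with y | q | q <;>
    simp only [preDist, cylDist, topDist, dist_comm, abs_sub_comm, add_comm]

lemma ofReal_min_le_preDist (p q : PrePt S h) :
    ENNReal.ofReal (min (dist (preFoot p) (preFoot q) + |preHeight p - preHeight q|)
      (2 * apexHeight S h - preHeight p - preHeight q)) ≤ preDist S h p q := by
  rcases p with x | p | p <;> rcases q with y | q | q <;> simp only [preDist] <;>
    try exact le_top
  · exact ENNReal.ofReal_le_ofReal ((min_le_left _ _).trans (by simp [preFoot, preHeight]))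
  · exact ENNReal.ofReal_le_ofReal ((min_le_left _ _).trans (by simp [preFoot, preHeight, cylDist]))
  · refine ENNReal.ofReal_le_ofReal (le_of_eq ?_)
    simp only [preFoot, preHeight, topDist, apexHeight]
    congr 1
    · rw [add_sub_add_left_eq_sub]
    · ring

lemma ofReal_abs_lift_sub_le_hatDistE (G : X → ℝ → ℝ)
    (hG : ∀ x x', G x (apexHeight S h) = G x' (apexHeight S h)) (h0 : 0 ≤ h)
    (hG₁ : ∀ x x' t t', |G x t - G x' t'| ≤ dist x x' + |t - t'|)
    (hG₂ : ∀ x x' t t', t ≤ apexHeight S h → t' ≤ apexHeight S h →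
      |G x t - G x' t'| ≤ 2 * apexHeight S h - t - t') (a b : GlueSp S h) :
    ENNReal.ofReal |lift G hG a - lift G hG b| ≤ hatDistE S h a b :=
  abs_lift_sub_le_glueDist _ _ (fun p q => (ENNReal.ofReal_le_ofReal (le_min (hG₁ _ _ _ _)
    (hG₂ _ _ _ _ (preHeight_le h0 p) (preHeight_le h0 q)))).trans (ofReal_min_le_preDist p q)) a b

lemma rectifiable_cyl_vseg (s : S) (t₀ t₁ : Icc (0 : ℝ) h) :
    Rectifiable (preDist S h) fun θ => .inr (.inl (vseg s t₀ t₁ θ)) :=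
  rectifiable_of_lipschitz (abs_nonneg _) fun θ _ θ' _ => ENNReal.ofReal_le_ofReal <| by
    simpa [cylDist, vseg] using abs_vseg_sub_le s t₀ t₁ θ θ'

lemma rectifiable_top_vseg (s : S) (u₀ u₁ : Icc (0 : ℝ) (h + Metric.diam S)) :
    Rectifiable (preDist S h) fun θ => .inr (.inr (vseg s u₀ u₁ θ)) :=
  rectifiable_of_lipschitz (abs_nonneg _) fun θ _ θ' _ => ENNReal.ofReal_le_ofReal <|
    (min_le_left _ _).trans <| by simpa [vseg] using abs_vseg_sub_le s u₀ u₁ θ θ'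

lemma exists_rectifiable_to_base (h0 : 0 ≤ h) (w : PrePt S h) :
    ∃ (x : X) (p q : ℝ → PrePt S h), Rectifiable (preDist S h) p ∧
      Rectifiable (preDist S h) q ∧ Quot.mk (Glue S h) (p 0) = Quot.mk _ w ∧
      Quot.mk (Glue S h) (p 1) = Quot.mk _ (q 0) ∧
      Quot.mk (Glue S h) (q 1) = Quot.mk _ (.inl x) := by
  let bot : Icc (0 : ℝ) h := ⟨0, le_rfl, h0⟩
  let top : Icc (0 : ℝ) h := ⟨h, h0, le_rfl⟩
  let low : Icc (0 : ℝ) (h + Metric.diam S) := ⟨0, le_rfl, add_nonneg h0 Metric.diam_nonneg⟩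
  have hbase (s : S) : Quot.mk (Glue S h) (.inr (.inl (s, bot))) = Quot.mk _ (.inl s) :=
    (Quot.sound (Glue.base s bot rfl)).symm
  rcases w with x | ⟨s, t⟩ | ⟨s, u⟩
  · exact ⟨x, _, _, rectifiable_const (preDist_self _), rectifiable_const (preDist_self _),
      rfl, rfl, rfl⟩
  · refine ⟨s, _, _, rectifiable_cyl_vseg s t bot, rectifiable_const (preDist_self _),
      by simp, rfl, by simpa using hbase s⟩
  · refine ⟨s, _, _, rectifiable_top_vseg s u low, rectifiable_cyl_vseg s top bot,
      by simp, ?_, by simpa using hbase s⟩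
    simpa using (Quot.sound (Glue.mid s top low rfl rfl)).symm

lemma hatDistE_ne_top (hgeo : IsGeodesicD X fun x y => dist x y) (h0 : 0 ≤ h)
    (a b : GlueSp S h) : hatDistE S h a b ≠ ⊤ := by
  obtain ⟨wa, rfl⟩ := Quot.exists_rep a
  obtain ⟨wb, rfl⟩ := Quot.exists_rep b
  obtain ⟨xa, pa, qa, hpa, hqa, ha0, ha1, ha2⟩ := exists_rectifiable_to_base h0 wa
  obtain ⟨xb, pb, qb, hpb, hqb, hb0, hb1, hb2⟩ := exists_rectifiable_to_base h0 wb
  obtain ⟨g, hg, hg0, hg1, hglen⟩ := hgeo xa xb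
  let pieces : Fin 5 → ℝ → PrePt S h :=
    ![pa, qa, fun θ => .inl (g θ), fun θ => qb (1 - θ), fun θ => pb (1 - θ)]
  have hpieces (i : Fin 5) : Rectifiable (preDist S h) (pieces i) := by
    fin_cases i
    exacts [hpa, hqa, ⟨hg, hglen ▸ ENNReal.ofReal_ne_top⟩, hqb.comp_one_sub preDist_comm,
      hpb.comp_one_sub preDist_comm]
  let P : PiecewisePath (preDist S h) (Glue S h) (Quot.mk _ wa) (Quot.mk _ wb) :=
    { m := 4
      piece := pieces
      cont := fun i => (hpieces i).1
      first := ha0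
      last := by simpa [pieces] using hb0
      link := fun i => by
        fin_cases i
        · exact ha1
        · simpa [pieces, hg0] using ha2
        · simpa [pieces, hg1] using hb2.symm
        · simpa [pieces] using hb1.symm }
  exact ne_top_of_le_ne_top (ENNReal.sum_ne_top.2 fun i _ => (hpieces i).2) (iInf_le _ P)

lemma hatDist_iotaX_le (hgeo : IsGeodesicD X fun x y => dist x y) (x y : X) :
    hatDist S h (iotaX S h x) (iotaX S h y) ≤ dist x y := by
  obtain ⟨g, hg, hg0, hg1, hglen⟩ := hgeo x y
  refine ENNReal.toReal_le_of_le_ofReal dist_nonneg ((glueDist_le_elen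
    (p := fun θ => (.inl (g θ) : PrePt S h)) hg ?_ ?_).trans_eq hglen)
  · rw [hg0]; rfl
  · rw [hg1]; rfl

lemma hatDist_self (a : GlueSp S h) : hatDist S h a a = 0 := by
  obtain ⟨w, rfl⟩ := Quot.exists_rep a
  have hle := glueDist_le_elen (R := Glue S h) (rectifiable_const (preDist_self w)).1 rfl rfl
  rw [elen_const (preDist_self w), nonpos_iff_eq_zero] at hle
  rw [hatDist, hatDistE, hle, ENNReal.toReal_zero]

lemma height_nonneg (h0 : 0 ≤ h) (a : GlueSp S h) : 0 ≤ height a := by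
  obtain ⟨w, rfl⟩ := Quot.exists_rep a
  exact preHeight_nonneg h0 w

lemma height_le_potential (h0 : 0 ≤ h) (y : X) (a : GlueSp S h) : height a ≤ potential y a := by
  obtain ⟨w, rfl⟩ := Quot.exists_rep a
  have := preHeight_le h0 w
  show preHeight w ≤ min (dist (preFoot w) y + preHeight w) (2 * apexHeight S h - preHeight w)
  exact le_min (le_add_of_nonneg_left dist_nonneg) (by linarith)

@[simp] lemma height_iotaX (x : X) : height (iotaX S h x) = 0 := rfl

@[simp] lemma proj_iotaX (h0 : 0 < h) (s₀ x : X) : proj s₀ (iotaX S h x) = x :=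
  if_neg (by simp only [preHeight]; linarith [Metric.diam_nonneg (s := S)])

lemma potential_eq (h0 : 0 < h) (hX : ∀ x x' : X, dist x x' ≤ h) (s₀ y : X) {a : GlueSp S h}
    (ha : height a ≤ h) : potential y a = dist (proj s₀ a) y + height a := by
  obtain ⟨w, rfl⟩ := Quot.exists_rep a
  have hdiam : 0 ≤ Metric.diam S := Metric.diam_nonneg
  have hw : preHeight w ≤ h := ha
  have hnapex : preHeight w ≠ apexHeight S h := by linarith
  have hfoot : dist (preFoot w) y ≤ h := hX _ _
  have hw0 := preHeight_nonneg h0.le w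
  show min (dist (preFoot w) y + preHeight w) (2 * apexHeight S h - preHeight w) =
    dist (if preHeight w = apexHeight S h then s₀ else preFoot w) y + preHeight w
  rw [if_neg hnapex, min_eq_left (by linarith)]

lemma abs_height_sub_le_hatDist (hgeo : IsGeodesicD X fun x y => dist x y) (h0 : 0 ≤ h)
    (a b : GlueSp S h) : |height a - height b| ≤ hatDist S h a b :=
  (ENNReal.ofReal_le_iff_le_toReal (hatDistE_ne_top hgeo h0 a b)).1 <|
    ofReal_abs_lift_sub_le_hatDistE _ _ h0
      (fun _ _ _ _ => le_add_of_nonneg_left dist_nonneg)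
      (fun _ _ t t' ht ht' => abs_le.2 ⟨by linarith, by linarith⟩) a b

lemma abs_potential_sub_le_hatDist (hgeo : IsGeodesicD X fun x y => dist x y) (h0 : 0 ≤ h)
    (y : X) (a b : GlueSp S h) : |potential y a - potential y b| ≤ hatDist S h a b := by
  refine (ENNReal.ofReal_le_iff_le_toReal (hatDistE_ne_top hgeo h0 a b)).1 <|
    ofReal_abs_lift_sub_le_hatDistE _ _ h0 (fun x x' t t' => ?_) (fun x x' t t' ht ht' => ?_) a b
  · refine (abs_min_sub_min_le_max _ _ _ _).trans (max_le ?_ ?_)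
    · rw [add_sub_add_comm]
      exact (abs_add_le _ _).trans (by linarith [abs_dist_sub_le x x' y])
    · rw [sub_sub_sub_cancel_left, abs_sub_comm]
      exact le_add_of_nonneg_left dist_nonneg
  · have hxt := le_min (le_add_of_nonneg_left (dist_nonneg (x := x) (y := y)))
      (by linarith : t ≤ 2 * apexHeight S h - t)
    have hxt' := le_min (le_add_of_nonneg_left (dist_nonneg (x := x') (y := y)))
      (by linarith : t' ≤ 2 * apexHeight S h - t')
    have := min_le_right (dist x y + t) (2 * apexHeight S h - t)
    have := min_le_right (dist x' y + t') (2 * apexHeight S h - t')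
    exact abs_le.2 ⟨by linarith, by linarith⟩

def Shadows (s₀ x : X) (a : GlueSp S h) : Prop := dist x (proj s₀ a) ≤ height a

lemma shadows_iotaX (h0 : 0 < h) (s₀ x : X) : Shadows s₀ x (iotaX S h x) := by
  simp [Shadows, h0]

lemma lt_hatDist_of_shadows (hgeo : IsGeodesicD X fun x y => dist x y) (h0 : 0 < h)
    (hX : ∀ x x' : X, dist x x' ≤ h) {s₀ r x : X} {a : GlueSp S h} {ε : ℝ} (hεh : ε ≤ h)
    (hxa : Shadows s₀ x a) (hrx : ε < dist r x) : ε < hatDist S h (iotaX S h r) a := by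
  have hpot : potential r a ≤ hatDist S h (iotaX S h r) a := by
    have h1 := abs_potential_sub_le_hatDist hgeo h0.le r (iotaX S h r) a
    rwa [potential_eq h0 hX s₀ r (by simpa using h0.le), proj_iotaX h0, height_iotaX,
      dist_self, zero_add, zero_sub, abs_neg,
      abs_of_nonneg ((height_nonneg h0.le a).trans (height_le_potential h0.le r a))] at h1
  refine lt_of_lt_of_le ?_ hpot
  rcases le_or_gt (height a) h with ha | ha
  · have hxa : dist x (proj s₀ a) ≤ height a := hxa
    rw [potential_eq h0 hX s₀ r ha]
    linarith [dist_triangle r (proj s₀ a) x, dist_comm r (proj s₀ a), dist_comm x (proj s₀ a)]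
  · linarith [height_le_potential h0.le r a]

/-- A shadow keeps following its cop by chasing the projection of the cop's new position. -/
lemma exists_shadows_step (hgeo : IsGeodesicD X fun x y => dist x y) (h0 : 0 < h) {t : ℝ}
    (ht : 0 ≤ t) (hX : ∀ x x' : X, dist x x' + t ≤ h) {s₀ x : X} {a b : GlueSp S h}
    (hxa : Shadows s₀ x a) (hab : hatDist S h a b ≤ t) :
    ∃ x', dist x x' ≤ t ∧ Shadows s₀ x' b := by
  set y := proj s₀ b
  obtain ⟨x', hxx', hx'y⟩ := hgeo.exists_dist_le x y ht
  refine ⟨x', hxx', ?_⟩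
  show dist x' y ≤ height b
  rcases le_or_gt (h - t) (height b) with hb | hb
  · linarith [hX x' y]
  have hX' : ∀ x x' : X, dist x x' ≤ h := fun x x' => by linarith [hX x x']
  have hheight := abs_le.1 ((abs_height_sub_le_hatDist hgeo h0.le a b).trans hab)
  have hpot := abs_le.1 ((abs_potential_sub_le_hatDist hgeo h0.le y a b).trans hab)
  rw [potential_eq h0 hX' s₀ y (by linarith), potential_eq h0 hX' s₀ y (by linarith),
    dist_self] at hpot
  have hxa : dist x (proj s₀ a) ≤ height a := hxa
  refine hx'y.trans (max_le (height_nonneg h0.le b) ?_)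
  linarith [dist_triangle x (proj s₀ a) y]

end Hat

theorem robberWins_hat_general {X : Type*} [MetricSpace X]
    (hX : GameSpaceD X (fun x y => dist x y)) (S : Set X)
    (k : ℕ) (M ε h : ℝ) (hε : 0 < ε) (hεh : ε ≤ h)
    (hh : M + Metric.diam (Set.univ : Set X) ≤ h) (τ : ℕ → ℝ) (hτ : IsAgility τ)
    (hτM : ∀ n, τ n ≤ M) (hrob : RobberWins X (fun x y => dist x y) k τ ε) :
    RobberWins (GlueSp S h) (hatDist S h) k τ (ε / 3) ∧
      ¬ CopsWinWith (GlueSp S h) (hatDist S h) k := by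
  obtain ⟨⟨s₀⟩, -, hcomp, hgeo⟩ := hX
  have h0 : 0 < h := hε.trans_le hεh
  have hτX (n : ℕ) (x y : X) : dist x y + τ n ≤ h := by
    linarith [hcomp.dist_le_diam x y, hτM n]
  have hX (x y : X) : dist x y ≤ h := by linarith [hτX 0 x y, hτ.1 0]
  have hwin : RobberWins (GlueSp S h) (hatDist S h) k τ (ε / 3) :=
    (hrob.transfer (iotaX S h) (Hat.hatDist_iotaX_le hgeo) (Hat.Shadows s₀)
      (Hat.shadows_iotaX h0 s₀)
      (fun n _ _ _ hxa hab => Hat.exists_shadows_step hgeo h0 (hτ.1 _).le (hτX (n + 1)) hxa hab)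
      (fun _ _ _ hxa hrx => Hat.lt_hatDist_of_shadows hgeo h0 hX hεh hxa hrx)).mono
      (by linarith)
  exact ⟨hwin, hwin.not_copsWinWith hτ (by linarith) Hat.hatDist_self⟩

/-- Let `(X,d)` be a game space, `S ⊆ X` a nonempty compact subset,
`k ∈ ℕ`, `M > 0`, `ε ∈ (0,h]` with `h ≥ M + diam X`. If the robber has a strategy against
`k` cops on `X` with agility function `τ ≤ M` (divergent, positive) guaranteeing
`d(rⁿ,cⁿᵢ) > ε` against every cop play, then he has a strategy against `k` cops on
`X_{h,S}` with the same agility function guaranteeing `d'(rⁿ,cⁿᵢ) > ε/3`; in particular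
`k` cops do not have a winning strategy on `X_{h,S}`. -/
theorem robberWins_hat {X : Type*} [MetricSpace X]
    (hX : GameSpaceD X (fun x y => dist x y)) (S : Set X) (hS : IsCompact S)
    (hSne : S.Nonempty) (k : ℕ) (M ε h : ℝ) (hM : 0 < M) (hε : 0 < ε) (hεh : ε ≤ h)
    (hh : M + Metric.diam (Set.univ : Set X) ≤ h) (τ : ℕ → ℝ) (hτ : IsAgility τ)
    (hτM : ∀ n, τ n ≤ M) (hrob : RobberWins X (fun x y => dist x y) k τ ε) :
    RobberWins (GlueSp S h) (hatDist S h) k τ (ε / 3) ∧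
      ¬ CopsWinWith (GlueSp S h) (hatDist S h) k :=
  robberWins_hat_general hX S k M ε h hε hεh hh τ hτ hτM hrob
end

section
/- Let (X,d) be a game space, S ⊆ X a nonempty compact subset, and h > 0. Then the trace map π is 1-Lipschitz on X ∪ cyl(h,S) with respect to the metric d' of X_{h,S}: for all x, y ∈ X ∪ cyl(h,S), d(π(x), π(y)) ≤ d'(x,y). Consequently, for every continuous path p whose image is contained in X ∪ cyl(h,S), the length of π∘p in (X,d) is at most the length of p in (X_{h,S},d'). -/
/-!
Game of Cops and Robber on metric spaces, following Mohar, formalized relative to an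
explicit distance function `d : Y → Y → ℝ`.
-/

open Set Filter Topology

section Trace

variable {X : Type*} [MetricSpace X]

/-- Points of the subset `X ∪ cyl(h,S)` of `X_{h,S}` (before gluing). -/
abbrev BasePt (S : Set X) (h : ℝ) : Type _ := X ⊕ CylPt S h

/-- The trace `π` of a point of `X ∪ cyl(h,S)`: `π(x) = x` for `x ∈ X` and `π((s,t)) = s`
for cylinder points. -/
def trace {S : Set X} {h : ℝ} : BasePt S h → X
  | Sum.inl x => x
  | Sum.inr p => (p.1 : X)

/-- The height of a point of `X ∪ cyl(h,S)`: `0` on `X`, and `t` at a cylinder point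
`(s,t)`. -/
def height {S : Set X} {h : ℝ} : BasePt S h → ℝ
  | Sum.inl _ => 0
  | Sum.inr p => (p.2 : ℝ)

/-- The canonical inclusion `X ∪ cyl(h,S) → X_{h,S}`. -/
def baseEmb {S : Set X} {h : ℝ} : BasePt S h → GlueSp S h
  | Sum.inl x => Quot.mk _ (Sum.inl x)
  | Sum.inr p => Quot.mk _ (Sum.inr (Sum.inl p))

end Trace

/-!
Fix `x₀ = π w`. The potential which is `d(x₀, π z)` on `X` and on the cylinder, and
`min (d(x₀, s)) (H - u + d(x₀, S))` at the point `(s,u)` of the top, is compatible with the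
gluing and `1`-Lipschitz for the metric of each part. Summing over the pieces of a piecewise
path from `w` to `w'` therefore bounds its length below by `d(π w, π w')`. The distance `d'` is
finite, as witnessed by the path that descends the cylinder from `w`, follows a geodesic of `X`
and climbs the cylinder to `w'`; this is needed because `hatDist = (hatDistE).toReal` is `0`
where `hatDistE = ⊤`.
The length estimate then follows because `elen` is monotone in the cost.
-/

open ENNReal

section PathLength

variable {Y : Type*}

theorem cost_le_elen (c : Y → Y → ℝ≥0∞) (p : ℝ → Y) : c (p 0) (p 1) ≤ elen c p := by
  let u : ℕ → ℝ := fun i => if i = 0 then 0 else 1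
  have hu : Monotone u := fun i j hij => by
    by_cases hi : i = 0
    · by_cases hj : j = 0 <;> simp [u, hi, hj]
    · simp [u, hi, show j ≠ 0 by omega]
  have huI : ∀ i, u i ∈ Icc (0 : ℝ) 1 := fun i => by by_cases hi : i = 0 <;> simp [u, hi]
  unfold elen
  exact le_of_eq_of_le (by simp [u]) (le_iSup _ (1, ⟨u, hu, huI⟩))

theorem elen_mono {c c' : Y → Y → ℝ≥0∞} (hc : ∀ a b, c a b ≤ c' a b) (p : ℝ → Y) :
    elen c p ≤ elen c' p :=
  iSup_mono fun _ => Finset.sum_le_sum fun _ _ => hc _ _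

variable {c : Y → Y → ℝ≥0∞} {p : ℝ → Y} {L : ℝ}

theorem elen_le_of_lipschitz (hL : 0 ≤ L)
    (hp : ∀ a ∈ Icc (0 : ℝ) 1, ∀ b ∈ Icc (0 : ℝ) 1,
      c (p a) (p b) ≤ ENNReal.ofReal (L * |a - b|)) :
    elen c p ≤ ENNReal.ofReal L := by
  refine iSup_le fun ⟨n, u, hu, huI⟩ => ?_
  have hstep : ∀ i, 0 ≤ L * (u (i + 1) - u i) := fun i =>
    mul_nonneg hL (sub_nonneg.2 (hu i.le_succ))
  calc ∑ i ∈ Finset.range n, c (p (u i)) (p (u (i + 1)))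
      ≤ ∑ i ∈ Finset.range n, ENNReal.ofReal (L * (u (i + 1) - u i)) :=
        Finset.sum_le_sum fun i _ => (hp _ (huI i) _ (huI (i + 1))).trans_eq <| by
          rw [abs_sub_comm, abs_of_nonneg (sub_nonneg.2 (hu i.le_succ))]
    _ = ENNReal.ofReal (L * (u n - u 0)) := by
        rw [← ENNReal.ofReal_sum_of_nonneg fun i _ => hstep i, ← Finset.mul_sum,
          Finset.sum_range_sub]
    _ ≤ ENNReal.ofReal L := by
        gcongr
        nlinarith [(huI n).2, (huI 0).1]

theorem econt_of_lipschitz (hL : 0 ≤ L)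
    (hp : ∀ a ∈ Icc (0 : ℝ) 1, ∀ b ∈ Icc (0 : ℝ) 1,
      c (p a) (p b) ≤ ENNReal.ofReal (L * |a - b|)) :
    econt c p := by
  intro t ht ε hε
  obtain ⟨r, hr, hrε⟩ : ∃ r : ℝ, 0 < r ∧ ENNReal.ofReal r < ε := by
    obtain ⟨r, -, hr0, hrε⟩ := ENNReal.lt_iff_exists_real_btwn.1 hε
    exact ⟨r, ENNReal.ofReal_pos.1 hr0, hrε⟩
  refine ⟨r / (L + 1), by positivity, fun t' ht' hδ => (hp t ht t' ht').trans_lt ?_⟩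
  refine lt_of_le_of_lt (ENNReal.ofReal_le_ofReal ?_) hrε
  calc L * |t - t'| ≤ L * (r / (L + 1)) := by rw [abs_sub_comm]; gcongr
    _ ≤ r := by rw [mul_div_assoc']; exact (div_le_iff₀ (by positivity)).2 (by nlinarith)

end PathLength

section GluedLength

theorem sum_sub_eq_of_chain {m : ℕ} (a b : Fin (m + 1) → ℝ)
    (hab : ∀ i : Fin m, b i.castSucc = a i.succ) :
    ∑ i, (a i - b i) = a 0 - b (Fin.last m) := by
  induction m with
  | zero => simp
  | succ m ih =>
    rw [Fin.sum_univ_castSucc, ih (fun i => a i.castSucc) (fun i => b i.castSucc)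
      fun i => (hab i.castSucc).trans (congrArg a (Fin.succ_castSucc i))]
    rw [hab (Fin.last m), Fin.succ_last, Fin.castSucc_zero]
    ring

variable {Y : Type*} {c : Y → Y → ℝ≥0∞} {R : Y → Y → Prop}

theorem ofReal_abs_sub_le_glueDist (φ : Y → ℝ) (hφR : ∀ a b, R a b → φ a = φ b)
    (hφc : ∀ a b, ENNReal.ofReal |φ a - φ b| ≤ c a b) (a b : Quot R) :
    ENNReal.ofReal |Quot.lift φ hφR a - Quot.lift φ hφR b| ≤ glueDist c R a b := by
  refine le_iInf fun P => ?_
  have ha : Quot.lift φ hφR a = φ (P.piece 0 0) := (congrArg (Quot.lift φ hφR) P.first).symm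
  have hb : Quot.lift φ hφR b = φ (P.piece (Fin.last P.m) 1) :=
    (congrArg (Quot.lift φ hφR) P.last).symm
  have hchain := sum_sub_eq_of_chain (fun i => φ (P.piece i 0)) (fun i => φ (P.piece i 1))
    fun i => congrArg (Quot.lift φ hφR) (P.link i)
  calc ENNReal.ofReal |Quot.lift φ hφR a - Quot.lift φ hφR b|
      = ENNReal.ofReal |∑ i, (φ (P.piece i 0) - φ (P.piece i 1))| := by rw [hchain, ha, hb]
    _ ≤ ENNReal.ofReal (∑ i, |φ (P.piece i 0) - φ (P.piece i 1)|) :=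
        ENNReal.ofReal_le_ofReal (Finset.abs_sum_le_sum_abs _ _)
    _ = ∑ i, ENNReal.ofReal |φ (P.piece i 0) - φ (P.piece i 1)| :=
        ENNReal.ofReal_sum_of_nonneg fun _ _ => abs_nonneg _
    _ ≤ P.len := Finset.sum_le_sum fun i _ => (hφc _ _).trans (cost_le_elen c _)

end GluedLength

section HatPotential

variable {X : Type*} [MetricSpace X] {S : Set X} {h : ℝ}

noncomputable def hatPotential (x₀ : X) (S : Set X) (h : ℝ) : PrePt S h → ℝ
  | .inl x => dist x₀ x
  | .inr (.inl p) => dist x₀ (p.1 : X)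
  | .inr (.inr p) => min (dist x₀ (p.1 : X)) (h + Metric.diam S - p.2 + Metric.infDist x₀ S)

theorem hatPotential_eq_of_glue (x₀ : X) (hS : Bornology.IsBounded S) {a b : PrePt S h}
    (hab : Glue S h a b) : hatPotential x₀ S h a = hatPotential x₀ S h b := by
  cases hab with
  | base => rfl
  | mid s t u ht hu =>
    have h0 : 0 ≤ h := ht ▸ t.2.1
    have hs := Metric.dist_le_infDist_add_diam (x := x₀) hS s.2
    simp only [hatPotential, hu]
    rw [min_eq_left (by linarith)]
  | apex p q hp hq =>
    simp only [hatPotential, hp, hq, sub_self, zero_add]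
    rw [min_eq_right (Metric.infDist_le_dist_of_mem p.1.2),
      min_eq_right (Metric.infDist_le_dist_of_mem q.1.2)]

theorem abs_hatPotential_top_sub_le (x₀ : X) (p q : TopPt S h) :
    |hatPotential x₀ S h (.inr (.inr p)) - hatPotential x₀ S h (.inr (.inr q))| ≤
      topDist p q := by
  set H := h + Metric.diam S
  set c₀ := Metric.infDist x₀ S
  have hpH : (p.2 : ℝ) ≤ H := p.2.2.2
  have hqH : (q.2 : ℝ) ≤ H := q.2.2.2
  have hcp : c₀ ≤ dist x₀ (p.1 : X) := Metric.infDist_le_dist_of_mem p.1.2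
  have hcq : c₀ ≤ dist x₀ (q.1 : X) := Metric.infDist_le_dist_of_mem q.1.2
  have hs : |dist x₀ (p.1 : X) - dist x₀ q.1| ≤ dist (p.1 : X) q.1 := by
    simpa only [dist_comm x₀] using abs_dist_sub_le (p.1 : X) q.1 x₀
  simp only [hatPotential, topDist]
  refine le_min ?_ ?_
  · calc _ ≤ max |dist x₀ (p.1 : X) - dist x₀ q.1| |(H - p.2 + c₀) - (H - q.2 + c₀)| :=
          abs_min_sub_min_le_max _ _ _ _
      _ ≤ _ := by
        rw [show H - p.2 + c₀ - (H - q.2 + c₀) = q.2 - p.2 by ring, abs_sub_comm (q.2 : ℝ)]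
        exact max_le (by linarith [abs_nonneg ((p.2 : ℝ) - q.2)])
          (by linarith [dist_nonneg (x := (p.1 : X)) (y := q.1)])
  · -- both values lie between `c₀` and `H - u + c₀`
    have hp₁ := min_le_right (dist x₀ (p.1 : X)) (H - p.2 + c₀)
    have hq₁ := min_le_right (dist x₀ (q.1 : X)) (H - q.2 + c₀)
    have hp₀ := le_min hcp (by linarith : c₀ ≤ H - p.2 + c₀)
    have hq₀ := le_min hcq (by linarith : c₀ ≤ H - q.2 + c₀)
    rw [abs_sub_le_iff]
    constructor <;> linarith

theorem ofReal_abs_hatPotential_sub_le_preDist (x₀ : X) (a b : PrePt S h) :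
    ENNReal.ofReal |hatPotential x₀ S h a - hatPotential x₀ S h b| ≤ preDist S h a b := by
  rcases a with x | p | p <;> rcases b with y | q | q
  any_goals exact le_top
  · refine ENNReal.ofReal_le_ofReal ?_
    simpa only [hatPotential, dist_comm x₀] using abs_dist_sub_le x y x₀
  · refine ENNReal.ofReal_le_ofReal ?_
    have hs := abs_dist_sub_le (p.1 : X) q.1 x₀
    simp only [hatPotential, cylDist, dist_comm x₀]
    linarith [abs_nonneg ((p.2 : ℝ) - q.2)]
  · exact ENNReal.ofReal_le_ofReal (abs_hatPotential_top_sub_le x₀ p q)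

theorem lift_hatPotential_baseEmb (x₀ : X) (hS : Bornology.IsBounded S) (w : BasePt S h) :
    Quot.lift (hatPotential x₀ S h) (fun _ _ => hatPotential_eq_of_glue x₀ hS) (baseEmb w) =
      dist x₀ (trace w) := by
  cases w <;> rfl

theorem ofReal_dist_trace_le_hatDistE (hS : Bornology.IsBounded S) (w w' : BasePt S h) :
    ENNReal.ofReal (dist (trace w) (trace w')) ≤ hatDistE S h (baseEmb w) (baseEmb w') := by
  have key := ofReal_abs_sub_le_glueDist (hatPotential (trace w) S h)
    (fun _ _ => hatPotential_eq_of_glue _ hS) (ofReal_abs_hatPotential_sub_le_preDist _)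
    (baseEmb w) (baseEmb w')
  rwa [lift_hatPotential_baseEmb _ hS, lift_hatPotential_baseEmb _ hS, dist_self, zero_sub,
    abs_neg, abs_of_nonneg dist_nonneg] at key

end HatPotential

theorem height_nonneg {X : Type*} {S : Set X} {h : ℝ} (w : BasePt S h) : 0 ≤ height w := by
  cases w with
  | inl => exact le_rfl
  | inr p => exact p.2.2.1

section VerticalPath

variable {X : Type*} [MetricSpace X] {S : Set X} {h : ℝ}

/-- `σ` is clamped to `[0,1]` so that the path is defined on all of `ℝ`. -/
noncomputable def verticalPath (σ : ℝ → ℝ) : BasePt S h → ℝ → PrePt S h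
  | .inl x => fun _ => .inl x
  | .inr p => fun u =>
    .inr (.inl (p.1, ⟨projIcc 0 1 zero_le_one (σ u) * p.2,
      mul_nonneg (projIcc 0 1 zero_le_one (σ u)).2.1 p.2.2.1,
      (mul_le_of_le_one_left p.2.2.1 (projIcc 0 1 zero_le_one (σ u)).2.2).trans p.2.2.2⟩))

theorem preDist_verticalPath_le {σ : ℝ → ℝ} (hσ : ∀ a b, |σ a - σ b| ≤ |a - b|)
    (w : BasePt S h) (a b : ℝ) :
    preDist S h (verticalPath σ w a) (verticalPath σ w b) ≤
      ENNReal.ofReal (height w * |a - b|) := by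
  cases w with
  | inl x => simp [verticalPath, preDist]
  | inr p =>
    refine ENNReal.ofReal_le_ofReal ?_
    simp only [cylDist, dist_self, zero_add, height, ← sub_mul, abs_mul, abs_of_nonneg p.2.2.1]
    rw [mul_comm]
    refine mul_le_mul_of_nonneg_left ?_ p.2.2.1
    exact (abs_projIcc_sub_projIcc _).trans (hσ a b)

theorem mk_verticalPath_of_eq_one {σ : ℝ → ℝ} {u : ℝ} (hσ : σ u = 1) (w : BasePt S h) :
    Quot.mk (Glue S h) (verticalPath σ w u) = baseEmb w := by
  cases w with
  | inl => rfl
  | inr p => simp [verticalPath, baseEmb, hσ]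

theorem mk_verticalPath_of_eq_zero {σ : ℝ → ℝ} {u : ℝ} (hσ : σ u = 0) (w : BasePt S h) :
    Quot.mk (Glue S h) (verticalPath σ w u) = iotaX S h (trace w) := by
  cases w with
  | inl => rfl
  | inr p => exact (Quot.sound (Glue.base p.1 _ (by simp [hσ]))).symm

end VerticalPath

section Finiteness

variable {X : Type*} [MetricSpace X] {S : Set X} {h : ℝ}

theorem hatDistE_baseEmb_lt_top (hgeo : IsGeodesicD X (fun x y => dist x y))
    (w w' : BasePt S h) : hatDistE S h (baseEmb w) (baseEmb w') < ⊤ := by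
  obtain ⟨γ, hγc, hγ0, hγ1, hγlen⟩ := hgeo (trace w) (trace w')
  have hdown := preDist_verticalPath_le (σ := fun u => 1 - u)
    (fun a b => by rw [show 1 - a - (1 - b) = b - a by ring, abs_sub_comm]) w
  have hup := preDist_verticalPath_le (σ := id) (fun _ _ => le_rfl) w'
  have hγc' : econt (preDist S h) (fun u => .inl (γ u)) := hγc
  have hγlen' : elen (preDist S h) (fun u => .inl (γ u)) < ⊤ := hγlen ▸ ofReal_lt_top
  let P : PiecewisePath (preDist S h) (Glue S h) (baseEmb w) (baseEmb w') :=
    { m := 2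
      piece := ![verticalPath (fun u => 1 - u) w, fun u => .inl (γ u), verticalPath id w']
      cont := fun i => by
        fin_cases i
        · exact econt_of_lipschitz (height_nonneg w) fun a _ b _ => hdown a b
        · exact hγc'
        · exact econt_of_lipschitz (height_nonneg w') fun a _ b _ => hup a b
      first := mk_verticalPath_of_eq_one (sub_zero 1) w
      last := mk_verticalPath_of_eq_one rfl w'
      link := fun i => by
        fin_cases i
        · exact (mk_verticalPath_of_eq_zero (sub_self 1) w).trans
            (congrArg (iotaX S h) hγ0.symm)
        · exact (congrArg (iotaX S h) hγ1).trans (mk_verticalPath_of_eq_zero rfl w').symm }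
  calc hatDistE S h (baseEmb w) (baseEmb w') ≤ P.len := iInf_le _ P
    _ = elen (preDist S h) (verticalPath (fun u => 1 - u) w) +
          elen (preDist S h) (fun u => .inl (γ u)) + elen (preDist S h) (verticalPath id w') := by
        simp [PiecewisePath.len, Fin.sum_univ_three, P]
    _ < ⊤ := by
        refine add_lt_top.2 ⟨add_lt_top.2 ⟨?_, hγlen'⟩, ?_⟩
        · exact (elen_le_of_lipschitz (height_nonneg w) fun a _ b _ => hdown a b).trans_lt
            ofReal_lt_top
        · exact (elen_le_of_lipschitz (height_nonneg w') fun a _ b _ => hup a b).trans_lt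
            ofReal_lt_top

theorem dist_trace_le_hatDist (hS : Bornology.IsBounded S)
    (hgeo : IsGeodesicD X (fun x y => dist x y)) (w w' : BasePt S h) :
    dist (trace w) (trace w') ≤ hatDist S h (baseEmb w) (baseEmb w') :=
  (ENNReal.ofReal_le_iff_le_toReal (hatDistE_baseEmb_lt_top hgeo w w').ne).1
    (ofReal_dist_trace_le_hatDistE hS w w')

end Finiteness

theorem trace_lipschitz_and_length_general {X : Type*} [MetricSpace X]
    (hX : GameSpaceD X (fun x y => dist x y)) (S : Set X) (hS : IsCompact S)
    (h : ℝ) :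
    (∀ w w' : BasePt S h,
        dist (trace w) (trace w') ≤ hatDist S h (baseEmb w) (baseEmb w')) ∧
      (∀ p : ℝ → BasePt S h,
        econt (fun a b => ENNReal.ofReal (hatDist S h (baseEmb a) (baseEmb b))) p →
        elen (fun a b => ENNReal.ofReal (dist (trace a) (trace b))) p ≤
          elen (fun a b => ENNReal.ofReal (hatDist S h (baseEmb a) (baseEmb b))) p) := by
  have hlip := dist_trace_le_hatDist hS.isBounded hX.2.2.2 (h := h)
  exact ⟨hlip, fun p _ => elen_mono (fun a b => ENNReal.ofReal_le_ofReal (hlip a b)) p⟩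

/-- The trace map `π` is `1`-Lipschitz on `X ∪ cyl(h,S)` with respect to
the metric `d'` of `X_{h,S}`, and consequently for every continuous path `p` with image in
`X ∪ cyl(h,S)` the length of `π ∘ p` in `(X,d)` is at most the length of `p` in
`(X_{h,S},d')`. -/
theorem trace_lipschitz_and_length {X : Type*} [MetricSpace X]
    (hX : GameSpaceD X (fun x y => dist x y)) (S : Set X) (hS : IsCompact S)
    (hSne : S.Nonempty) (h : ℝ) (hh : 0 < h) :
    (∀ w w' : BasePt S h,
        dist (trace w) (trace w') ≤ hatDist S h (baseEmb w) (baseEmb w')) ∧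
      (∀ p : ℝ → BasePt S h,
        econt (fun a b => ENNReal.ofReal (hatDist S h (baseEmb a) (baseEmb b))) p →
        elen (fun a b => ENNReal.ofReal (dist (trace a) (trace b))) p ≤
          elen (fun a b => ENNReal.ofReal (hatDist S h (baseEmb a) (baseEmb b))) p) :=
  trace_lipschitz_and_length_general hX S hS h
end
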